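/- Let M and N be matroids of ranks r and s on the same ground set E such that every flat of N is a flat of M. Then for any subset A of E, rank_N(A) ≤ rank_M(A) ≤ rank_N(A) + r − s. -/

import Mathlib

/-- A matroid given by its rank function on subsets of a finite ground set. -/
structure MatroidRank (α : Type) [DecidableEq α] [Fintype α] where
  r : Finset α → ℕ
  r_empty : r ∅ = 0
  r_le_insert : ∀ A x, r A ≤ r (insert x A)
  insert_le : ∀ A x, r (insert x A) ≤ r A + 1
  r_local : ∀ A x y, r (insert x A) = r A → r (insert y A) = r A →
    r (insert x (insert y A)) = r A

variable {α : Type} [DecidableEq α] [Fintype α]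

/-- `F` is a flat (closed set) of the matroid `M`. -/
def MatroidRank.IsFlat (M : MatroidRank α) (F : Finset α) : Prop :=
  ∀ x ∉ F, M.r F < M.r (insert x F)

/-- Closure of a set in the matroid `M`. -/
def MatroidRank.cl (M : MatroidRank α) (A : Finset α) : Finset α :=
  Finset.univ.filter (fun x => M.r (insert x A) = M.r A)

/-- The matroid `M` has no loops. -/
def MatroidRank.Loopfree (M : MatroidRank α) : Prop :=
  ∀ x : α, M.r {x} = 1

/-!
The difference `rank_M - rank_N` is monotone. Adding an element `x` to `A` raises each rank by
`0` or `1`, so it suffices that `x` cannot raise the `N`-rank without raising the `M`-rank: if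
`x` is `M`-spanned by `A`, it is `M`-spanned by the `N`-flat `cl_N A ⊇ A`, which is an `M`-flat,
so `x ∈ cl_N A`. Comparing `∅ ⊆ A ⊆ E` gives both inequalities.
-/

namespace MatroidRank

variable (M : MatroidRank α)

theorem r_mono : Monotone M.r :=
  Finset.monotone_iff_forall_le_insert.mpr fun A x _ => M.r_le_insert A x

theorem r_insert_insert_eq {A : Finset α} {x : α} (hx : M.r (insert x A) = M.r A) (y : α) :
    M.r (insert x (insert y A)) = M.r (insert y A) := by
  rcases (M.r_le_insert A y).eq_or_lt with hy | hy
  · exact (M.r_local A x y hx hy.symm).trans hy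
  · have hle : M.r (insert x (insert y A)) ≤ M.r A + 1 := by
      rw [Finset.insert_comm]
      exact hx ▸ M.insert_le (insert x A) y
    have hge := M.r_le_insert (insert y A) x
    omega

theorem r_insert_eq_of_subset {A C : Finset α} {x : α} (hx : M.r (insert x A) = M.r A)
    (hAC : A ⊆ C) : M.r (insert x C) = M.r C := by
  rw [← Finset.union_eq_right.mpr hAC]
  clear hAC
  induction C using Finset.induction with
  | empty => simpa using hx
  | insert y C _ ih =>
    rw [Finset.union_insert]
    exact M.r_insert_insert_eq ih y

theorem r_union_eq_of_forall {A B : Finset α} (hB : ∀ y ∈ B, M.r (insert y A) = M.r A) :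
    M.r (A ∪ B) = M.r A := by
  induction B using Finset.induction with
  | empty => simp
  | insert y B _ ih =>
    rw [Finset.union_insert, M.r_insert_eq_of_subset (hB y (B.mem_insert_self y))
      Finset.subset_union_left]
    exact ih fun z hz => hB z (Finset.mem_insert_of_mem hz)

theorem mem_cl {A : Finset α} {x : α} : x ∈ M.cl A ↔ M.r (insert x A) = M.r A := by
  simp [cl]

theorem subset_cl (A : Finset α) : A ⊆ M.cl A := fun x hx => by
  rw [mem_cl, Finset.insert_eq_of_mem hx]

theorem r_cl (A : Finset α) : M.r (M.cl A) = M.r A := by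
  simpa [Finset.union_eq_right.mpr (M.subset_cl A)] using
    M.r_union_eq_of_forall (B := M.cl A) fun _ => M.mem_cl.mp

theorem isFlat_cl (A : Finset α) : M.IsFlat (M.cl A) := fun x hx => by
  have hA : M.r A < M.r (insert x A) :=
    (M.r_le_insert A x).lt_of_ne fun h => hx (M.mem_cl.mpr h.symm)
  rw [r_cl]
  exact hA.trans_le (M.r_mono (Finset.insert_subset_insert x (M.subset_cl A)))

def IsQuotient (N M : MatroidRank α) : Prop :=
  ∀ F, N.IsFlat F → M.IsFlat F

variable {M} {N : MatroidRank α}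

theorem IsQuotient.r_insert_eq (hNM : N.IsQuotient M) {A : Finset α} {x : α}
    (hx : M.r (insert x A) = M.r A) : N.r (insert x A) = N.r A := by
  by_contra hne
  have hxA : x ∉ N.cl A := fun h => hne (N.mem_cl.mp h)
  have hlt := hNM _ (N.isFlat_cl A) x hxA
  have heq := M.r_insert_eq_of_subset hx (N.subset_cl A)
  omega

theorem IsQuotient.monotone_r_sub (hNM : N.IsQuotient M) :
    Monotone fun A => (M.r A : ℤ) - N.r A := by
  refine Finset.monotone_iff_forall_le_insert.mpr fun A x _ => ?_
  have hN := N.r_le_insert A x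
  have hN' := N.insert_le A x
  rcases (M.r_le_insert A x).eq_or_lt with hM | hM
  · have := hNM.r_insert_eq hM.symm
    omega
  · omega

end MatroidRank

/-- If every flat of N is a flat of M, then
rank_N(A) ≤ rank_M(A) ≤ rank_N(A) + r − s. -/
theorem rank_between (M N : MatroidRank α)
    (hflats : ∀ F, N.IsFlat F → M.IsFlat F)
    (A : Finset α) :
    N.r A ≤ M.r A ∧
      (M.r A : ℤ) ≤ (N.r A : ℤ) + (M.r Finset.univ : ℤ) - (N.r Finset.univ : ℤ) := by
  have hmono := MatroidRank.IsQuotient.monotone_r_sub hflats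
  have hbot : (M.r ∅ : ℤ) - N.r ∅ ≤ M.r A - N.r A := hmono (Finset.empty_subset A)
  have htop : (M.r A : ℤ) - N.r A ≤ M.r Finset.univ - N.r Finset.univ :=
    hmono (Finset.subset_univ A)
  rw [M.r_empty, N.r_empty] at hbot
  omega
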